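/- Let Q_{12}={3,6,15,19}, Q_{34}={6,9,15,19}, Q_{13}={6,15,23,24}, Q_{24}={15,19,23,24}, Q_{14}={3,9,15,24}, Q_{23}={3,9,15,23}, and let P̃_{ij} be the image under I^{-1} of the coordinate plane P_{ij} ⊂ F_2^4. Then for each pair ij, the union Q_{ij} ∪ P̃_{ij} is an octad of the extended binary Golay code, and every Q_{ij} avoids the label 5. -/

import Mathlib

/-- The indicator vector in `𝔽₂²⁴` of a set of labels in `{1,…,24}`
(coordinate `i : Fin 24` carries the label `i+1`). -/
def indic (s : Finset ℕ) : Fin 24 → ZMod 2 := fun i => if (i : ℕ) + 1 ∈ s then 1 else 0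

/-- An explicit basis of the extended binary Golay code, given by the support sets
of nine octads and three dodecads. -/
def golayBasisSets : Fin 12 → Finset ℕ :=
  ![{1,2,16,18,5,12,22,3}, {7,4,19,10,12,15,8,16}, {23,3,9,19,13,18,8,11},
    {6,3,22,4,21,17,15,9}, {20,10,11,17,14,13,22,12}, {24,2,10,19,9,5,14,21},
    {8,7,15,17,11,23,18,16}, {16,1,2,21,4,7,8,18}, {18,1,16,8,23,13,14,5},
    {8,7,15,9,19,23,4,22,13,18,1,16}, {18,23,13,22,3,1,11,10,2,16,7,8},
    {16,1,2,10,12,7,5,9,15,8,23,18}]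

/-- The extended binary Golay code `𝒢₂₄ ⊂ 𝔽₂²⁴`. -/
def golayCode : Submodule (ZMod 2) (Fin 24 → ZMod 2) :=
  Submodule.span (ZMod 2) (Set.range fun i => indic (golayBasisSets i))

/-- The weight of a vector in `𝔽₂²⁴`: the number of nonzero coordinates. -/
def weight (v : Fin 24 → ZMod 2) : ℕ := (Finset.univ.filter fun i => v i ≠ 0).card

/-- The hypercube `𝔽₂⁴`. -/
abbrev F16 := Fin 4 → ZMod 2

/-- Shorthand for a vector in `𝔽₂⁴`. -/
def v4 (a b c d : ZMod 2) : F16 := ![a, b, c, d]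

/-- The complement of the octad `𝒪₉ = {3,5,6,9,15,19,23,24}` in `{1,…,24}`. -/
def O9compl : Finset ℕ := {1, 2, 4, 7, 8, 10, 11, 12, 13, 14, 16, 17, 18, 20, 21, 22}

/-- The labelling map `I` from the complement of `𝒪₉` to the hypercube `𝔽₂⁴`. -/
def Imap : ℕ → F16
  | 1 => v4 0 0 0 0
  | 2 => v4 0 0 1 1
  | 4 => v4 0 1 1 0
  | 7 => v4 1 1 1 1
  | 8 => v4 1 0 0 1
  | 10 => v4 1 1 0 1
  | 11 => v4 1 0 0 0
  | 12 => v4 0 1 1 1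
  | 13 => v4 0 1 0 0
  | 14 => v4 0 0 1 0
  | 16 => v4 1 0 1 0
  | 17 => v4 0 0 0 1
  | 18 => v4 0 1 0 1
  | 20 => v4 1 1 1 0
  | 21 => v4 1 1 0 0
  | 22 => v4 1 0 1 1
  | _ => v4 0 0 0 0

/-- The coordinate plane `P_{ij} = {a ∈ 𝔽₂⁴ : a_k = 0 for k ≠ i, j}`. -/
def Pplane (i j : Fin 4) : Finset F16 :=
  Finset.univ.filter fun a => ∀ k, k ≠ i → k ≠ j → a k = 0

/-- The six index pairs `12, 34, 13, 24, 14, 23` (zero-based). -/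
def pairIdx : Fin 6 → Fin 4 × Fin 4 := ![(0,1), (2,3), (0,2), (1,3), (0,3), (1,2)]

/-- The quadruplets `Q_{ij} ⊂ 𝒪₉` in the order `12, 34, 13, 24, 14, 23`. -/
def Qsets : Fin 6 → Finset ℕ :=
  ![{3,6,15,19}, {6,9,15,19}, {6,15,23,24}, {15,19,23,24}, {3,9,15,24}, {3,9,15,23}]

/-- `P̃_{ij} = I⁻¹(P_{ij})`: the labels in the complement of `𝒪₉` mapping into the
coordinate plane `P_{ij}` under `I`. -/
def Ptilde (s : Fin 6) : Finset ℕ :=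
  O9compl.filter fun n => Imap n ∈ Pplane (pairIdx s).1 (pairIdx s).2

lemma indic_apply_ne_zero_iff (s : Finset ℕ) (i : Fin 24) : indic s i ≠ 0 ↔ (i : ℕ) + 1 ∈ s := by
  unfold indic
  split_ifs <;> simp_all

lemma weight_indic {s : Finset ℕ} (hs : s ⊆ Finset.Icc 1 24) : weight (indic s) = s.card := by
  refine Finset.card_nbij (fun i => (i : ℕ) + 1) (fun i hi => ?_) (fun i _ j _ h => ?_) (fun n hn => ?_)
  · simpa [indic_apply_ne_zero_iff] using hi
  · exact Fin.ext (by simpa using h)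
  · obtain ⟨h1, h24⟩ := Finset.mem_Icc.mp (hs hn)
    refine ⟨⟨n - 1, by omega⟩, ?_, by simp only; omega⟩
    simpa [indic_apply_ne_zero_iff, Nat.sub_add_cancel h1] using hn

lemma sum_indic_golayBasisSets_mem (t : Finset (Fin 12)) :
    ∑ i ∈ t, indic (golayBasisSets i) ∈ golayCode :=
  Submodule.sum_mem _ fun i _ => Submodule.subset_span ⟨i, rfl⟩

-- Found by Gaussian elimination over `𝔽₂` against the spanning words `golayBasisSets`.
def octadBasisCoords : Fin 6 → Finset (Fin 12) :=
  ![{3, 6, 9}, {0, 1, 2, 3, 7, 8, 9, 10}, {0, 1, 3, 5, 6}, {0, 2, 5, 6, 7, 8, 9, 11},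
    {0, 5, 6, 7, 8, 9, 11}, {0, 1, 2, 8, 10}]

lemma indic_Qsets_union_Ptilde (s : Fin 6) :
    indic (Qsets s ∪ Ptilde s) = ∑ i ∈ octadBasisCoords s, indic (golayBasisSets i) := by
  fin_cases s <;> decide

lemma Qsets_union_Ptilde_subset_Icc (s : Fin 6) : Qsets s ∪ Ptilde s ⊆ Finset.Icc 1 24 := by
  fin_cases s <;> decide

lemma card_Qsets_union_Ptilde (s : Fin 6) : (Qsets s ∪ Ptilde s).card = 8 := by
  fin_cases s <;> decide

lemma five_notMem_Qsets (s : Fin 6) : 5 ∉ Qsets s := by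
  fin_cases s <;> decide

/-- For each pair `ij` among `12, 34, 13, 24, 14, 23`, the union `Q_{ij} ∪ P̃_{ij}` is
an octad of the extended binary Golay code, and every `Q_{ij}` avoids the label 5. -/
theorem Qij_octads :
    ∀ s : Fin 6,
      indic (Qsets s ∪ Ptilde s) ∈ golayCode ∧
      weight (indic (Qsets s ∪ Ptilde s)) = 8 ∧
      5 ∉ Qsets s := by
  intro s
  refine ⟨?_, ?_, five_notMem_Qsets s⟩
  · rw [indic_Qsets_union_Ptilde]
    exact sum_indic_golayBasisSets_mem _
  · rw [weight_indic (Qsets_union_Ptilde_subset_Icc s), card_Qsets_union_Ptilde]
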